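/- Let n, m ∈ ℕ with m ≤ n, let ε ≥ 0, and let f : {0,1}^n → {−1,1}. For S ⊆ {1,…,n} define the Fourier coefficient f̂(S) = 2^{−n} Σ_{x ∈ {0,1}^n} f(x) ∏_{i∈S} (−1)^{x_i}, and define the average sensitivity as(f) = 2^{−n} Σ_{x ∈ {0,1}^n} |{i ∈ {1,…,n} : f(x) ≠ f(x^{⊕i})}|, where x^{⊕i} is x with its i-th bit flipped. If f̂(S)² ≤ ε for every S with |S| ≤ m, then as(f) ≥ m · (1 − ε · |{S ⊆ {1,…,n} : |S| ≤ m}|). -/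

import Mathlib

/-- The Fourier coefficient `f̂(S) = 2^{−n} Σ_x f(x) ∏_{i∈S} (−1)^{x_i}` of a function on
the Boolean cube. -/
noncomputable def boolFourierCoeff (n : ℕ) (f : (Fin n → Bool) → ℝ) (S : Finset (Fin n)) : ℝ :=
  (2 ^ n : ℝ)⁻¹ * ∑ x : Fin n → Bool, f x * ∏ i ∈ S, (if x i then (-1 : ℝ) else 1)

open Classical in
/-- The average sensitivity
`as(f) = 2^{−n} Σ_x |{i : f(x) ≠ f(x^{⊕i})}|` over the Boolean cube. -/
noncomputable def avgSens (n : ℕ) (f : (Fin n → Bool) → ℝ) : ℝ :=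
  (2 ^ n : ℝ)⁻¹ * ∑ x : Fin n → Bool,
    ((Finset.univ.filter fun i : Fin n => f (Function.update x i (!x i)) ≠ f x).card : ℝ)

/-!
For each coordinate `i`, the Fourier coefficients of `(f - f ∘ flip i) / 2` are those of `f` on
the sets containing `i` and vanish elsewhere; for `f` with values `±1` the square of this function
is the indicator of sensitivity at `i`. Parseval's identity therefore gives
`as(f) = ∑_S |S| f̂(S)²` and `∑_S f̂(S)² = 1`. The sets with `|S| ≤ m` carry Fourier weight at
most `ε · #{S : |S| ≤ m}`, and each of the others contributes with a factor `|S| > m`.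
-/

open Finset

namespace BoolCube

variable {n : ℕ}

def walsh (S : Finset (Fin n)) (x : Fin n → Bool) : ℝ :=
  ∏ i ∈ S, if x i then -1 else 1

theorem boolFourierCoeff_eq (f : (Fin n → Bool) → ℝ) (S : Finset (Fin n)) :
    boolFourierCoeff n f S = (2 ^ n : ℝ)⁻¹ * ∑ x, f x * walsh S x :=
  rfl

theorem sum_walsh_mul_walsh (x y : Fin n → Bool) :
    ∑ S, walsh S x * walsh S y = if x = y then 2 ^ n else 0 := by
  have hfactor : ∀ i, 1 + (if x i then (-1 : ℝ) else 1) * (if y i then -1 else 1) =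
      if x i = y i then 2 else 0 := by
    intro i; cases x i <;> cases y i <;> norm_num
  simp only [walsh, ← prod_mul_distrib]
  -- `∑_S ∏_{i ∈ S} a i = ∏_i (1 + a i)`
  rw [← powerset_univ, ← prod_one_add]
  simp only [hfactor, Fintype.prod_ite_zero, prod_const, card_univ, Fintype.card_fin, funext_iff]

theorem sum_sq_boolFourierCoeff (g : (Fin n → Bool) → ℝ) :
    ∑ S, boolFourierCoeff n g S ^ 2 = (2 ^ n : ℝ)⁻¹ * ∑ x, g x ^ 2 := by
  have hsq : ∀ S, boolFourierCoeff n g S ^ 2 =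
      ((2 ^ n : ℝ)⁻¹) ^ 2 * ∑ x, ∑ y, g x * g y * (walsh S x * walsh S y) := by
    intro S
    rw [boolFourierCoeff_eq, mul_pow, sq (∑ x, _), sum_mul_sum]
    simp only [mul_mul_mul_comm]
  calc ∑ S, boolFourierCoeff n g S ^ 2
      = ((2 ^ n : ℝ)⁻¹) ^ 2 * ∑ x, ∑ y, g x * g y * ∑ S, walsh S x * walsh S y := by
        simp only [hsq, mul_sum]
        rw [sum_comm]
        exact sum_congr rfl fun x _ => sum_comm
    _ = ((2 ^ n : ℝ)⁻¹) ^ 2 * ∑ x, g x ^ 2 * 2 ^ n := by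
        simp [sum_walsh_mul_walsh, sq]
    _ = (2 ^ n : ℝ)⁻¹ * ∑ x, g x ^ 2 := by
        rw [← sum_mul]; field_simp

theorem sum_sq_boolFourierCoeff_eq_one {f : (Fin n → Bool) → ℝ}
    (hf : ∀ x, f x = 1 ∨ f x = -1) : ∑ S, boolFourierCoeff n f S ^ 2 = 1 := by
  have hsq : ∀ x, f x ^ 2 = 1 := fun x => by rcases hf x with h | h <;> simp [h]
  simp [sum_sq_boolFourierCoeff, hsq]

def flipBit (i : Fin n) (x : Fin n → Bool) : Fin n → Bool :=
  Function.update x i (!x i)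

theorem flipBit_involutive (i : Fin n) : Function.Involutive (flipBit i) := by
  intro x
  ext j
  by_cases hj : j = i
  · subst hj; simp [flipBit]
  · simp [flipBit, Function.update_of_ne hj]

theorem walsh_flipBit (S : Finset (Fin n)) (i : Fin n) (x : Fin n → Bool) :
    walsh S (flipBit i x) = (if i ∈ S then -1 else 1) * walsh S x := by
  have hsign : ∀ j, (if flipBit i x j then (-1 : ℝ) else 1) =
      (if j = i then -1 else 1) * if x j then -1 else 1 := by
    intro j
    by_cases hj : j = i
    · subst hj; cases h : x j <;> simp [flipBit, h]
    · simp [flipBit, hj]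
  simp only [walsh, hsign, prod_mul_distrib, prod_ite_eq']

theorem boolFourierCoeff_comp_flipBit (f : (Fin n → Bool) → ℝ) (i : Fin n)
    (S : Finset (Fin n)) :
    boolFourierCoeff n (f ∘ flipBit i) S = (if i ∈ S then -1 else 1) * boolFourierCoeff n f S := by
  have hsubst := Equiv.sum_comp ((flipBit_involutive i).toPerm) fun x => f (flipBit i x) * walsh S x
  simp only [Function.Involutive.coe_toPerm, flipBit_involutive i _] at hsubst
  simp only [boolFourierCoeff_eq, Function.comp_apply, ← hsubst, walsh_flipBit, mul_sum]
  exact sum_congr rfl fun x _ => by ring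

noncomputable def flipDiff (i : Fin n) (f : (Fin n → Bool) → ℝ) (x : Fin n → Bool) : ℝ :=
  (f x - f (flipBit i x)) / 2

theorem boolFourierCoeff_flipDiff (f : (Fin n → Bool) → ℝ) (i : Fin n) (S : Finset (Fin n)) :
    boolFourierCoeff n (flipDiff i f) S = if i ∈ S then boolFourierCoeff n f S else 0 := by
  have hlin : boolFourierCoeff n (flipDiff i f) S =
      (boolFourierCoeff n f S - boolFourierCoeff n (f ∘ flipBit i) S) / 2 := by
    simp only [boolFourierCoeff_eq, flipDiff, Function.comp_apply, div_mul_eq_mul_div, ← sum_div,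
      sub_mul, sum_sub_distrib]
    ring
  rw [hlin, boolFourierCoeff_comp_flipBit]
  split_ifs <;> ring

noncomputable def influence (i : Fin n) (f : (Fin n → Bool) → ℝ) : ℝ :=
  (2 ^ n : ℝ)⁻¹ * ∑ x, flipDiff i f x ^ 2

theorem influence_eq_sum_sq_boolFourierCoeff (i : Fin n) (f : (Fin n → Bool) → ℝ) :
    influence i f = ∑ S with i ∈ S, boolFourierCoeff n f S ^ 2 := by
  rw [influence, ← sum_sq_boolFourierCoeff, sum_filter]
  simp only [boolFourierCoeff_flipDiff, ite_pow, zero_pow two_ne_zero]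

theorem sum_influence (f : (Fin n → Bool) → ℝ) :
    ∑ i, influence i f = ∑ S, (#S : ℝ) * boolFourierCoeff n f S ^ 2 := by
  simp only [influence_eq_sum_sq_boolFourierCoeff, sum_filter]
  rw [sum_comm]
  simp [sum_ite_mem]

theorem avgSens_eq_sum_influence {f : (Fin n → Bool) → ℝ} (hf : ∀ x, f x = 1 ∨ f x = -1) :
    avgSens n f = ∑ i, influence i f := by
  have hcard : ∀ x, ((univ.filter fun i : Fin n => f (flipBit i x) ≠ f x).card : ℝ) =
      ∑ i, flipDiff i f x ^ 2 := by
    intro x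
    rw [natCast_card_filter]
    refine sum_congr rfl fun i _ => ?_
    rcases hf x with hx | hx <;> rcases hf (flipBit i x) with hy | hy <;>
      simp [flipDiff, hx, hy] <;> norm_num
  simp only [avgSens, influence, ← mul_sum]
  rw [sum_comm]
  exact congrArg _ (sum_congr rfl fun x _ => hcard x)

end BoolCube

open BoolCube in
theorem avg_sensitivity_of_small_low_degree_fourier_general
    (n m : ℕ) (ε : ℝ)
    (f : (Fin n → Bool) → ℝ) (hf : ∀ x : Fin n → Bool, f x = 1 ∨ f x = -1)
    (hsmall : ∀ S : Finset (Fin n), S.card ≤ m → (boolFourierCoeff n f S) ^ 2 ≤ ε) :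
    (m : ℝ) *
        (1 - ε * ((Finset.univ.filter fun S : Finset (Fin n) => S.card ≤ m).card : ℝ)) ≤
      avgSens n f := by
  set w := fun S => boolFourierCoeff n f S ^ 2
  have hlow : ∑ S with #S ≤ m, w S ≤ ε * #{S : Finset (Fin n) | #S ≤ m} := by
    rw [mul_comm, ← nsmul_eq_mul, ← sum_const]
    exact sum_le_sum fun S hS => hsmall S (mem_filter.mp hS).2
  have hhigh : 1 - ∑ S with #S ≤ m, w S = ∑ S with ¬#S ≤ m, w S := by
    rw [← sum_sq_boolFourierCoeff_eq_one hf, ← sum_filter_add_sum_filter_not univ (#· ≤ m)]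
    ring
  calc (m : ℝ) * (1 - ε * #{S : Finset (Fin n) | #S ≤ m})
      ≤ m * ∑ S with ¬#S ≤ m, w S := by rw [← hhigh]; gcongr
    _ ≤ ∑ S with ¬#S ≤ m, (#S : ℝ) * w S := by
        rw [mul_sum]
        gcongr with S hS
        exact_mod_cast (not_le.mp (mem_filter.mp hS).2).le
    _ ≤ ∑ S, (#S : ℝ) * w S :=
        sum_le_sum_of_subset_of_nonneg (subset_univ _) fun S _ _ => by positivity
    _ = avgSens n f := by rw [avgSens_eq_sum_influence hf, sum_influence]

/-- If all Fourier coefficients of `f : {0,1}^n → {−1,1}` on sets of size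
at most `m ≤ n` satisfy `f̂(S)² ≤ ε`, then
`as(f) ≥ m · (1 − ε · |{S : |S| ≤ m}|)`. -/
theorem avg_sensitivity_of_small_low_degree_fourier
    (n m : ℕ) (hmn : m ≤ n) (ε : ℝ) (hε : 0 ≤ ε)
    (f : (Fin n → Bool) → ℝ) (hf : ∀ x : Fin n → Bool, f x = 1 ∨ f x = -1)
    (hsmall : ∀ S : Finset (Fin n), S.card ≤ m → (boolFourierCoeff n f S) ^ 2 ≤ ε) :
    (m : ℝ) *
        (1 - ε * ((Finset.univ.filter fun S : Finset (Fin n) => S.card ≤ m).card : ℝ)) ≤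
      avgSens n f :=
  avg_sensitivity_of_small_low_degree_fourier_general n m ε f hf hsmall
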